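/- arXiv:2504.09718 — 12 statements merged into one kernel-verified Lean document; each statement's English description precedes it below -/
import Mathlib

section
/- Let (X, G, {*_g}, f) be a (G,*,f)-family of quandles. Then for any x, y ∈ X and any g, h, q ∈ G the map f satisfies x *_{f(g,h)·f(g*h,q)} y = x *_{f(g,q)·f(g*q,h*q)} y, where · denotes the group product in G. -/
/-- A quandle operation on a type: idempotent, right-invertible (unique division),
and right self-distributive. -/
def IsQuandleOp {Q : Type*} (op : Q → Q → Q) : Prop :=
  (∀ x, op x x = x) ∧
  (∀ y z, ∃! x, op x y = z) ∧
  (∀ x y z, op (op x y) z = op (op x z) (op y z))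

/-- A `(G,*,f)`-family of quandles: a group `G` with a quandle operation `star`,
a map `f : G × G → G`, and a family of binary operations `op g : X × X → X`. -/
structure GStarFFamily (G : Type*) [Group G] (X : Type*) where
  star : G → G → G
  f : G → G → G
  op : G → X → X → X
  star_quandle : IsQuandleOp star
  idem : ∀ (x : X) (g : G), op g x x = x
  mul_comp : ∀ (x y : X) (g h : G), op (g * h) x y = op h (op g x y) y
  one_op : ∀ (x y : X), op 1 x y = x
  distrib : ∀ (x y z : X) (g h q : G),
    op (f (star g h) q) (op (f g h) x y) z =
      op (f (star g q) (star h q)) (op (f g q) x z) (op (f h q) y z)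

/-- For a `(G,*,f)`-family of quandles, the function `f` satisfies
`x *_{f(g,h)·f(g*h,q)} y = x *_{f(g,q)·f(g*q,h*q)} y` for all `x, y ∈ X` and `g, h, q ∈ G`. -/
theorem stmt_1 {G : Type*} [Group G] {X : Type*} [Nonempty X] (F : GStarFFamily G X) :
    ∀ (x y : X) (g h q : G),
      F.op (F.f g h * F.f (F.star g h) q) x y =
        F.op (F.f g q * F.f (F.star g q) (F.star h q)) x y := by
  intro x y g h q
  have := F.distrib x y y g h q
  rw [F.idem y (F.f h q)] at this
  rw [F.mul_comp, F.mul_comp, this]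
end

section
/- Let (X, G, {*_g}, f) be a (G,*,f)-family of quandles. Then the set X × G with the binary operation (x,g) · (y,h) = (x *_{f(g,h)} y, g*h) is a quandle (the associated quandle). -/
/-- For a `(G,*,f)`-family of quandles, the set `X × G` with operation
`(x,g) · (y,h) = (x *_{f(g,h)} y, g*h)` is a quandle (the associated quandle). -/
theorem stmt_2 {G : Type*} [Group G] {X : Type*} [Nonempty X] (F : GStarFFamily G X) :
    IsQuandleOp (fun p q : X × G => (F.op (F.f p.2 q.2) p.1 q.1, F.star p.2 q.2)) := by
  obtain ⟨hidem, hinv, hdist⟩ := F.star_quandle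
  have key : ∀ (a : G) (x y : X), F.op a⁻¹ (F.op a x y) y = x := by
    intro a x y
    rw [← F.mul_comp, mul_inv_cancel, F.one_op]
  have key' : ∀ (a : G) (x y : X), F.op a (F.op a⁻¹ x y) y = x := by
    intro a x y
    have := key a⁻¹ x y
    rwa [inv_inv] at this
  refine ⟨?_, ?_, ?_⟩
  · rintro ⟨x, g⟩
    simp [F.idem, hidem]
  · rintro ⟨y, h⟩ ⟨z, k⟩
    obtain ⟨g, hg, hgu⟩ := hinv h k
    refine ⟨(F.op (F.f g h)⁻¹ z y, g), ?_, ?_⟩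
    · simp only [Prod.mk.injEq]
      exact ⟨key' (F.f g h) z y, hg⟩
    · rintro ⟨x', g'⟩ heq
      simp only [Prod.mk.injEq] at heq
      obtain ⟨h1, h2⟩ := heq
      have hg' : g' = g := hgu g' h2
      subst hg'
      have : F.op (F.f g' h)⁻¹ (F.op (F.f g' h) x' y) y = F.op (F.f g' h)⁻¹ z y := by
        rw [h1]
      rw [key] at this
      simp [this]
  · rintro ⟨x, g⟩ ⟨y, h⟩ ⟨z, q⟩
    simp only [Prod.mk.injEq]
    exact ⟨F.distrib x y z g h q, hdist g h q⟩
end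

section
/- Let (X, {*_g}) be a G-family of quandles. Then the set X × G with the binary operation (x,g) · (y,h) = (x *_h y, h⁻¹gh) is a quandle (the associated quandle of the G-family). -/
/-- A `G`-family of quandles: a nonempty set `X` with binary operations
`*_g : X × X → X` for `g ∈ G` satisfying the Ishii–Iwakiri–Jang–Oshiro axioms. -/
structure GFamily (G : Type*) [Group G] (X : Type*) where
  op : G → X → X → X
  idem : ∀ (x : X) (g : G), op g x x = x
  mul_comp : ∀ (x y : X) (g h : G), op (g * h) x y = op h (op g x y) y
  one_op : ∀ (x y : X), op 1 x y = x
  distrib : ∀ (x y z : X) (g h : G),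
    op h (op g x y) z = op (h⁻¹ * g * h) (op h x z) (op h y z)

/-- For a `G`-family of quandles, `X × G` with the operation
`(x,g) · (y,h) = (x *_h y, h⁻¹gh)` is a quandle (the associated quandle). -/
theorem stmt_5 {G : Type*} [Group G] {X : Type*} [Nonempty X] (F : GFamily G X) :
    IsQuandleOp (fun p q : X × G => (F.op q.2 p.1 q.1, q.2⁻¹ * p.2 * q.2)) := by
  refine ⟨?_, ?_, ?_⟩
  · rintro ⟨x, g⟩
    simp [F.idem]
  · rintro ⟨y, h⟩ ⟨z, k⟩
    refine ⟨(F.op h⁻¹ z y, h * k * h⁻¹), ?_, ?_⟩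
    · refine Prod.ext ?_ ?_
      · show F.op h (F.op h⁻¹ z y) y = z
        rw [← F.mul_comp]; simp [F.one_op]
      · show h⁻¹ * (h * k * h⁻¹) * h = k
        group
    · rintro ⟨x, g⟩ hx
      have h1 : F.op h x y = z := congrArg Prod.fst hx
      have h2 : h⁻¹ * g * h = k := congrArg Prod.snd hx
      refine Prod.ext ?_ ?_
      · show x = F.op h⁻¹ z y
        rw [← h1, ← F.mul_comp]; simp [F.one_op]
      · show g = h * k * h⁻¹
        rw [← h2]; group
  · rintro ⟨x, g⟩ ⟨y, h⟩ ⟨z, k⟩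
    refine Prod.ext ?_ ?_
    · exact F.distrib x y z h k
    · show k⁻¹ * (h⁻¹ * g * h) * k = (k⁻¹ * h * k)⁻¹ * (k⁻¹ * g * k) * (k⁻¹ * h * k)
      group
end

section
/- Let (Q,∘) be a quandle and (X, {*_a}_{a∈Q}) a Q-family of quandles. Then the set X × Q with the binary operation (x,a) · (y,b) = (x *_b y, a ∘ b) is a quandle (the associated quandle of the Q-family). -/
/-- A `Q`-family of quandles over a quandle `(Q, ∘)`: a nonempty set `X` with binary
operations `*_a : X × X → X` for `a ∈ Q` satisfying the axioms of Ishii et al. -/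
structure QFamily {Q : Type*} (circ : Q → Q → Q) (X : Type*) where
  circ_quandle : IsQuandleOp circ
  op : Q → X → X → X
  idem : ∀ (x : X) (a : Q), op a x x = x
  bij : ∀ (x : X) (a : Q), Function.Bijective (fun y : X => op a y x)
  distrib : ∀ (x y z : X) (a b : Q),
    op b (op a x y) z = op (circ a b) (op b x z) (op b y z)

/-- For a `Q`-family of quandles, `X × Q` with the operation
`(x,a) · (y,b) = (x *_b y, a ∘ b)` is a quandle (the associated quandle). -/
theorem stmt_7 {Q : Type*} (circ : Q → Q → Q) {X : Type*} [Nonempty X]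
    (F : QFamily circ X) :
    IsQuandleOp (fun p q : X × Q => (F.op q.2 p.1 q.1, circ p.2 q.2)) := by
  obtain ⟨cidem, cdiv, cdist⟩ := F.circ_quandle
  refine ⟨?_, ?_, ?_⟩
  · rintro ⟨x, a⟩
    simp [F.idem, cidem]
  · rintro ⟨y, b⟩ ⟨z, c⟩
    obtain ⟨a, ha, ha'⟩ := cdiv b c
    obtain ⟨x, hx⟩ := (F.bij y b).2 z
    refine ⟨(x, a), ?_, ?_⟩
    · exact Prod.ext hx ha
    · rintro ⟨x', a'⟩ h
      have h1 : F.op b x' y = z := congrArg Prod.fst h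
      have h2 : circ a' b = c := congrArg Prod.snd h
      have hx' : x' = x := (F.bij y b).1 (h1.trans hx.symm)
      exact Prod.ext hx' (ha' a' h2)
  · rintro ⟨x, a⟩ ⟨y, b⟩ ⟨z, c⟩
    exact Prod.ext (F.distrib x y z b c) (cdist a b c)
end

section
/- Let X be a set, (Q,∘) a quandle, and for each t ∈ Q a binary operation *_t : X × X → X. Then the set X × Q with the binary operation (x,s) · (y,t) = (x *_t y, s ∘ t) is a quandle if and only if: (1) x *_t x = x for all x ∈ X, t ∈ Q; (2) for each (y,t) ∈ X × Q the map (x,s) ↦ (x *_t y, s ∘ t) is a bijection of X × Q; (3) (x *_t y) *_u z = (x *_u z) *_{t∘u} (y *_u z) for all x, y, z ∈ X, t, u ∈ Q. -/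
/-- Let `X` be a set, `(Q,∘)` a quandle and `*_t : X × X → X` a binary operation for
each `t ∈ Q`. Then `X × Q` with the operation `(x,s) · (y,t) = (x *_t y, s ∘ t)` is a
quandle if and only if the three listed conditions hold. -/
theorem stmt_10 {X Q : Type*} (circ : Q → Q → Q) (hQ : IsQuandleOp circ)
    (op : Q → X → X → X) :
    IsQuandleOp (fun p q : X × Q => (op q.2 p.1 q.1, circ p.2 q.2)) ↔
      ((∀ (x : X) (t : Q), op t x x = x) ∧
       (∀ (y : X) (t : Q),
         Function.Bijective (fun p : X × Q => ((op t p.1 y, circ p.2 t) : X × Q))) ∧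
       (∀ (x y z : X) (t u : Q),
         op u (op t x y) z = op (circ t u) (op u x z) (op u y z))) := by
  obtain ⟨hQ1, hQ2, hQ3⟩ := hQ
  constructor
  · rintro ⟨h1, h2, h3⟩
    refine ⟨fun x t => ?_, fun y t => ?_, fun x y z t u => ?_⟩
    · exact congrArg Prod.fst (h1 (x, t))
    · rw [Function.bijective_iff_existsUnique]
      exact fun b => h2 (y, t) b
    · exact congrArg Prod.fst (h3 (x, t) (y, t) (z, u))
  · rintro ⟨h1, h2, h3⟩
    refine ⟨fun p => ?_, fun y z => ?_, fun p q r => ?_⟩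
    · exact Prod.ext (h1 p.1 p.2) (hQ1 p.2)
    · exact (Function.bijective_iff_existsUnique _).mp (h2 y.1 y.2) z
    · exact Prod.ext (h3 p.1 q.1 r.1 q.2 r.2) (hQ3 p.2 q.2 r.2)
end

section
/- Let (X, G, {*_g}) be an (f,⊗)-system. If (G,⊗) is a quandle, then the associated set X × G with the binary operation (x,g) · (y,h) = (x *_{f(g,h)} y, g ⊗ h) is a quandle. -/
/-- An `(f,⊗)`-system: sets `X`, `G`, a map `f : G × G → G`, a binary operation `⊗` on
`G`, and a family of binary operations `*_g : X × X → X` for `g ∈ G` satisfying the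
three axioms of Definition 3.7. -/
def IsFOtimesSystem {X G : Type*} (f : G → G → G) (otimes : G → G → G)
    (op : G → X → X → X) : Prop :=
  (∀ (x : X) (g : G), op (f g g) x x = x) ∧
  (∀ (g h : G) (y z : X), ∃! x : X, op (f g h) x y = z) ∧
  (∀ (x y z : X) (g h q : G),
    op (f (otimes g h) q) (op (f g h) x y) z =
      op (f (otimes g q) (otimes h q)) (op (f g q) x z) (op (f h q) y z))

/-- For an `(f,⊗)`-system, if `(G,⊗)` is a quandle, then the associated set `X × G`
with operation `(x,g) · (y,h) = (x *_{f(g,h)} y, g ⊗ h)` is a quandle. -/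
theorem stmt_11 {X G : Type*} (f : G → G → G) (otimes : G → G → G)
    (op : G → X → X → X) (hsys : IsFOtimesSystem f otimes op)
    (hq : IsQuandleOp otimes) :
    IsQuandleOp (fun p q : X × G => (op (f p.2 q.2) p.1 q.1, otimes p.2 q.2)) := by
  obtain ⟨h1, h2, h3⟩ := hsys
  obtain ⟨q1, q2, q3⟩ := hq
  refine ⟨?_, ?_, ?_⟩
  · rintro ⟨x, g⟩
    exact Prod.ext (h1 x g) (q1 g)
  · rintro ⟨y, h⟩ ⟨z, k⟩
    obtain ⟨g, hg, hgu⟩ := q2 h k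
    obtain ⟨x, hx, hxu⟩ := h2 g h y z
    refine ⟨(x, g), ?_, ?_⟩
    · simp [hx, hg]
    · rintro ⟨x', g'⟩ he
      simp only [Prod.mk.injEq] at he
      have hg' : g' = g := hgu g' he.2
      subst hg'
      exact Prod.ext (hxu x' he.1) rfl
  · rintro ⟨x, g⟩ ⟨y, h⟩ ⟨z, q⟩
    exact Prod.ext (h3 x y z g h q) (q3 g h q)
end

section
/- Let (X, {*_g}) be a G-family of quandles. Define f : G × G → G by f(g,h) = h and ⊗ : G × G → G by g ⊗ h = h⁻¹gh. Then (X, G, {*_g}) is an (f,⊗)-system, (G,⊗) is a quandle, and consequently X × G with (x,g) · (y,h) = (x *_{f(g,h)} y, g ⊗ h) is a quandle. -/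
/-- A `G`-family of quandles, with `f(g,h) = h` and `g ⊗ h = h⁻¹gh`, is an
`(f,⊗)`-system, `(G,⊗)` is a quandle (the conjugation quandle), and consequently
`X × G` with `(x,g)·(y,h) = (x *_{f(g,h)} y, g ⊗ h)` is a quandle. -/
theorem stmt_12 {G : Type*} [Group G] {X : Type*} [Nonempty X] (F : GFamily G X)
    (f : G → G → G) (otimes : G → G → G)
    (hf : ∀ g h : G, f g h = h) (ho : ∀ g h : G, otimes g h = h⁻¹ * g * h) :
    IsFOtimesSystem f otimes F.op ∧
    IsQuandleOp otimes ∧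
    IsQuandleOp (fun p q : X × G => (F.op (f p.2 q.2) p.1 q.1, otimes p.2 q.2)) := by
  have inv : ∀ (h : G) (y z : X), ∃! x : X, F.op h x y = z := by
    intro h y z
    refine ⟨F.op h⁻¹ z y, ?_, ?_⟩
    · show F.op h (F.op h⁻¹ z y) y = z
      rw [← F.mul_comp, inv_mul_cancel, F.one_op]
    · intro x hx
      rw [← hx, ← F.mul_comp, mul_inv_cancel, F.one_op]
  refine ⟨⟨?_, ?_, ?_⟩, ⟨?_, ?_, ?_⟩, ⟨?_, ?_, ?_⟩⟩
  · intro x g; rw [hf]; exact F.idem x g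
  · intro g h y z; rw [hf]; exact inv h y z
  · intro x y z g h q
    simp only [hf, ho]
    exact F.distrib x y z h q
  · intro x; rw [ho]; group
  · intro y z
    refine ⟨y * z * y⁻¹, by show otimes _ _ = _; rw [ho]; group, ?_⟩
    intro x hx; rw [ho] at hx
    have := congrArg (fun w => y * w * y⁻¹) hx
    simpa [mul_assoc] using this
  · intro x y z; simp only [ho]; group
  · intro p
    dsimp only
    rw [hf, ho]
    refine Prod.ext (F.idem p.1 p.2) ?_
    simp
  · rintro ⟨y, h⟩ ⟨z, k⟩
    refine ⟨(F.op h⁻¹ z y, h * k * h⁻¹), ?_, ?_⟩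
    · dsimp only
      simp only [hf, ho]
      refine Prod.ext ?_ ?_
      · simp only; rw [← F.mul_comp, inv_mul_cancel, F.one_op]
      · simp only; group
    · rintro ⟨x, g⟩ hx
      dsimp only at hx
      simp only [hf, ho, Prod.mk.injEq] at hx
      obtain ⟨h1, h2⟩ := hx
      refine Prod.ext ?_ ?_
      · simp only [← h1, ← F.mul_comp, mul_inv_cancel, F.one_op]
      · have := congrArg (fun w => h * w * h⁻¹) h2
        simpa [mul_assoc] using this
  · rintro ⟨x, g⟩ ⟨y, h⟩ ⟨z, q⟩
    simp only [hf, ho, Prod.mk.injEq]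
    constructor
    · have := F.distrib x y z h q
      convert this using 2
    · group
end

section
/- Let (Q,∘) be a quandle and (X, {*_a}_{a∈Q}) a Q-family of quandles. Define f : Q × Q → Q by f(a,b) = b and ⊗ : Q × Q → Q by a ⊗ b = a ∘ b. Then (X, Q, {*_a}) is an (f,⊗)-system whose associated set X × Q with (x,a) · (y,b) = (x *_{f(a,b)} y, a ⊗ b) is a quandle. -/
/-- A `Q`-family of quandles, with `f(a,b) = b` and `a ⊗ b = a ∘ b`, is an
`(f,⊗)`-system whose associated set `X × Q` with
`(x,a)·(y,b) = (x *_{f(a,b)} y, a ⊗ b)` is a quandle. -/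
theorem stmt_13 {Q : Type*} (circ : Q → Q → Q) {X : Type*} [Nonempty X]
    (F : QFamily circ X) (f : Q → Q → Q) (otimes : Q → Q → Q)
    (hf : ∀ a b : Q, f a b = b) (ho : ∀ a b : Q, otimes a b = circ a b) :
    IsFOtimesSystem f otimes F.op ∧
    IsQuandleOp (fun p q : X × Q => (F.op (f p.2 q.2) p.1 q.1, otimes p.2 q.2)) := by
  obtain ⟨cidem, cdiv, cdist⟩ := F.circ_quandle
  simp only [IsFOtimesSystem, IsQuandleOp, hf, ho]
  constructor
  · refine ⟨fun x g => F.idem x g, fun g h y z => ?_, fun x y z g h q => F.distrib x y z h q⟩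
    obtain ⟨x, hx⟩ := (F.bij y h).2 z
    exact ⟨x, hx, fun w hw => (F.bij y h).1 (hw.trans hx.symm)⟩
  · refine ⟨fun ⟨x, a⟩ => ?_, fun ⟨y, b⟩ ⟨z, c⟩ => ?_, fun ⟨x, a⟩ ⟨y, b⟩ ⟨z, c⟩ => ?_⟩
    · simp [F.idem, cidem]
    · obtain ⟨a, ha, hau⟩ := cdiv b c
      obtain ⟨x, hx⟩ := (F.bij y b).2 z
      refine ⟨(x, a), by simp [hx, ha], ?_⟩
      rintro ⟨w, d⟩ hw
      simp only [Prod.mk.injEq] at hw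
      exact Prod.ext ((F.bij y b).1 (hw.1.trans hx.symm)) (hau d hw.2)
    · simp only [Prod.mk.injEq]
      exact ⟨F.distrib x y z b c, cdist a b c⟩
end

section
/- Let (X, {*_g}) be a G-family of quandles and let (X × G, ·) be its associated quandle with operation (x,g) · (y,h) = (x *_h y, h⁻¹gh). Then the map ρ : X × G → X × G defined by ρ(x,g) = (x, g⁻¹) is a good involution on the associated quandle. -/
/-- A good involution on a quandle-type operation `op`: an involution `ρ` with
`(u ▷ v) ▷ ρ(v) = u` and `ρ(u) ▷ v = ρ(u ▷ v)`. -/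
def IsGoodInvolution {Q : Type*} (op : Q → Q → Q) (ρ : Q → Q) : Prop :=
  (∀ u, ρ (ρ u) = u) ∧
  (∀ u v, op (op u v) (ρ v) = u) ∧
  (∀ u v, op (ρ u) v = ρ (op u v))

/-- For a `G`-family of quandles with associated quandle operation
`(x,g) · (y,h) = (x *_h y, h⁻¹gh)` on `X × G`, the map `ρ(x,g) = (x, g⁻¹)` is a good
involution on the associated quandle. -/
theorem stmt_15 {G : Type*} [Group G] {X : Type*} [Nonempty X] (F : GFamily G X) :
    IsGoodInvolution (fun p q : X × G => (F.op q.2 p.1 q.1, q.2⁻¹ * p.2 * q.2))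
      (fun p : X × G => (p.1, p.2⁻¹)) := by
  refine ⟨fun u => by simp, fun u v => ?_, fun u v => ?_⟩
  · obtain ⟨x, g⟩ := u; obtain ⟨y, h⟩ := v
    simp only [Prod.mk.injEq]
    constructor
    · rw [← F.mul_comp, mul_inv_cancel, F.one_op]
    · group
  · exact Prod.ext rfl (by group)
end

section
/- Let S be a group and (X, G, τ) an S-axet. Define binary operations ∘_s : X × X → X for each s ∈ S by x ∘_s y = τ_y(s) · x (the action of the group element τ_y(s) ∈ G on x). Then: (1) x ∘_s x = x for all x ∈ X, s ∈ S; (2) for each s ∈ S and y, z ∈ X there is a unique x ∈ X with x ∘_s y = z; (3) (x ∘_s y) ∘_{s'} z = (x ∘_{s'} z) ∘_s (y ∘_{s'} z) for all x, y, z ∈ X and s, s' ∈ S. In other words, with f(s,s') = s' and s ⊗ s' = s, the axet is an (f,⊗)-system. -/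
/-- An `S`-axet: a set `X`, a group `G` acting on `X`, and a map `τ : X × S → G` such
that `τ_x(s)` stabilises `x`, `τ_x(s)τ_x(s') = τ_x(ss')`, and
`τ_{g·x}(s) = g τ_x(s) g⁻¹`. -/
structure Axet (S : Type*) [Group S] (X G : Type*) [Group G] [MulAction G X] where
  tau : X → S → G
  stab : ∀ (x : X) (s : S), tau x s • x = x
  hom : ∀ (x : X) (s s' : S), tau x s * tau x s' = tau x (s * s')
  conj : ∀ (x : X) (s : S) (g : G), tau (g • x) s = g * tau x s * g⁻¹

/-- For an `S`-axet, the operations `x ∘_s y = τ_y(s) · x` satisfy idempotency, unique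
right division, and the twisted self-distributivity: with `f(s,s') = s'` and
`s ⊗ s' = s`, the axet is an `(f,⊗)`-system. -/
theorem stmt_16 {S : Type*} [Group S] {X G : Type*} [Group G] [MulAction G X]
    (A : Axet S X G) (circ : S → X → X → X)
    (hcirc : ∀ (s : S) (x y : X), circ s x y = A.tau y s • x) :
    (∀ (x : X) (s : S), circ s x x = x) ∧
    (∀ (s : S) (y z : X), ∃! x : X, circ s x y = z) ∧
    (∀ (x y z : X) (s s' : S),
      circ s' (circ s x y) z = circ s (circ s' x z) (circ s' y z)) ∧
    IsFOtimesSystem (fun _ s' : S => s') (fun s _ : S => s) circ := by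
  have idem : ∀ (x : X) (s : S), circ s x x = x := fun x s => by
    rw [hcirc]; exact A.stab x s
  have uniq : ∀ (s : S) (y z : X), ∃! x : X, circ s x y = z := by
    intro s y z
    refine ⟨(A.tau y s)⁻¹ • z, ?_, ?_⟩
    · show circ s _ y = z
      rw [hcirc, smul_smul, mul_inv_cancel, one_smul]
    · intro x hx
      rw [hcirc] at hx
      rw [← hx, inv_smul_smul]
  have dist : ∀ (x y z : X) (s s' : S),
      circ s' (circ s x y) z = circ s (circ s' x z) (circ s' y z) := by
    intro x y z s s'
    simp only [hcirc, A.conj, smul_smul]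
    group
  exact ⟨idem, uniq, dist, fun x s => idem x s, fun g h => uniq h,
    fun x y z g h q => dist x y z h q⟩
end

section
/- Let S be a group with identity e and (X, G, τ) an S-axet such that the element τ_x(e) ∈ G acts trivially on X for every x ∈ X. Consider the associated quandle (X × S, ·) with operation (x,s) · (y,t) = (τ_y(t) · x, s). Then the map ρ : X × S → X × S defined by ρ(x,s) = (x, s⁻¹) is a good involution on (X × S, ·). -/
/-- For an `S`-axet in which `τ_x(e)` acts trivially on `X` for every `x`, the map
`ρ(x,s) = (x, s⁻¹)` is a good involution on the associated quandle `(X × S, ·)` with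
`(x,s) · (y,t) = (τ_y(t) · x, s)`. -/
theorem stmt_17 {S : Type*} [Group S] {X G : Type*} [Group G] [MulAction G X]
    (A : Axet S X G) (htriv : ∀ x y : X, A.tau x (1 : S) • y = y) :
    IsGoodInvolution (fun p q : X × S => (A.tau q.1 q.2 • p.1, p.2))
      (fun p : X × S => (p.1, p.2⁻¹)) := by
  refine ⟨fun u => by simp, fun u v => ?_, fun u v => rfl⟩
  have : A.tau v.1 v.2⁻¹ • A.tau v.1 v.2 • u.1 = u.1 := by
    rw [smul_smul, A.hom, inv_mul_cancel, htriv]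
  exact Prod.ext this rfl
end

section
/- The group presented by four generators a, b, f, h subject to the single relation abf = bfab (equivalently, the relator (bf)⁻¹a⁻¹(bf)ab) is isomorphic to the free group of rank 3. -/
/-- The letters `a`, `b`, `f`, `h` of the presentation `⟨a, b, f, h | abf = bfab⟩`. -/
abbrev wA : FreeGroup (Fin 4) := FreeGroup.of 0
abbrev wB : FreeGroup (Fin 4) := FreeGroup.of 1
abbrev wF : FreeGroup (Fin 4) := FreeGroup.of 2
abbrev wH : FreeGroup (Fin 4) := FreeGroup.of 3

/-!
Put `c = bf`. The relation `abf = bfab` reads `ac = cab`, i.e. `b = ⁅a⁻¹, c⁻¹⁆`, and then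
`f = b⁻¹c`. So `b` and `f` can be eliminated in favour of `c` (a Tietze transformation), and what
is left is the free group on `a`, `c`, `h`.
-/

open scoped commutatorElement

theorem relator_eq_one_iff_eq_commutator {M : Type*} [Group M] (a b f : M) :
    f⁻¹ * b⁻¹ * a⁻¹ * b * f * a * b = 1 ↔ b = ⁅a⁻¹, (b * f)⁻¹⁆ := by
  have hsplit : f⁻¹ * b⁻¹ * a⁻¹ * b * f * a * b = ⁅a⁻¹, (b * f)⁻¹⁆⁻¹ * b := by
    simp only [commutatorElement_def]
    group
  rw [hsplit, inv_mul_eq_one, eq_comm]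

namespace WatchAndLinkedFingers

open PresentedGroup

abbrev relator : FreeGroup (Fin 4) := wF⁻¹ * wB⁻¹ * wA⁻¹ * wB * wF * wA * wB

abbrev G : Type := PresentedGroup ({relator} : Set (FreeGroup (Fin 4)))

theorem lift_relator {M : Type*} [Group M] (v : Fin 4 → M) :
    FreeGroup.lift v relator = (v 2)⁻¹ * (v 1)⁻¹ * (v 0)⁻¹ * v 1 * v 2 * v 0 * v 1 := by
  simp only [relator, map_mul, map_inv, FreeGroup.lift_apply_of]

theorem of_one_eq_commutator :
    (of 1 : G) = ⁅(of 0 : G)⁻¹, (of 1 * of 2 : G)⁻¹⁆ := by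
  rw [← relator_eq_one_iff_eq_commutator]
  have hrel := one_of_mem (rels := {relator}) rfl
  simp only [relator, map_mul, map_inv] at hrel
  exact hrel

def toFreeGenerators : Fin 4 → FreeGroup (Fin 3) :=
  let a := FreeGroup.of 0
  let c := FreeGroup.of 1
  ![a, ⁅a⁻¹, c⁻¹⁆, ⁅a⁻¹, c⁻¹⁆⁻¹ * c, FreeGroup.of 2]

theorem lift_toFreeGenerators_relator : FreeGroup.lift toFreeGenerators relator = 1 := by
  rw [lift_relator, relator_eq_one_iff_eq_commutator]
  simp only [toFreeGenerators, Matrix.cons_val, mul_inv_cancel_left]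

def toFree : G →* FreeGroup (Fin 3) :=
  toGroup fun _ hr => hr ▸ lift_toFreeGenerators_relator

def ofFree : FreeGroup (Fin 3) →* G :=
  FreeGroup.lift ![of 0, of 1 * of 2, of 3]

theorem ofFree_comp_toFree : ofFree.comp toFree = MonoidHom.id G := by
  refine PresentedGroup.ext fun i => ?_
  fin_cases i <;>
    simp only [MonoidHom.comp_apply, MonoidHom.id_apply, toFree, toGroup.of, toFreeGenerators,
      ofFree, map_mul, map_inv, map_commutatorElement, FreeGroup.lift_apply_of, Fin.reduceFinMk,
      Matrix.cons_val]
  · exact of_one_eq_commutator.symm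
  · rw [← of_one_eq_commutator, inv_mul_cancel_left]

theorem toFree_comp_ofFree : toFree.comp ofFree = MonoidHom.id (FreeGroup (Fin 3)) := by
  refine FreeGroup.ext_hom _ _ fun i => ?_
  fin_cases i <;>
    simp only [MonoidHom.comp_apply, MonoidHom.id_apply, toFree, toGroup.of, toFreeGenerators,
      ofFree, map_mul, FreeGroup.lift_apply_of, Fin.reduceFinMk, Matrix.cons_val,
      mul_inv_cancel_left]

def equivFree : G ≃* FreeGroup (Fin 3) :=
  toFree.toMulEquiv ofFree ofFree_comp_toFree toFree_comp_ofFree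

end WatchAndLinkedFingers

/-- The group `⟨a, b, f, h | abf = bfab⟩` (with relator `f⁻¹b⁻¹a⁻¹bfab`) is isomorphic
to the free group of rank 3. -/
theorem stmt_19 :
    Nonempty (PresentedGroup ({wF⁻¹ * wB⁻¹ * wA⁻¹ * wB * wF * wA * wB} : Set (FreeGroup (Fin 4)))
      ≃* FreeGroup (Fin 3)) :=
  ⟨WatchAndLinkedFingers.equivFree⟩
end
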